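/- For 0 ≤ r < k and n ≥ 1, x^r · det((C(ki+r, i-j)·x^k + C(k(i+1)+r, i+1-j))_{i,j=0}^{n-1}) = L^{(k)}_{kn+r}(x). -/

import Mathlib

/-- Generalized binomial coefficient `C(a,b)` for integer `a`, with `C(a,b) = 0` for `b < 0`. -/
noncomputable def gchoose (a b : ℤ) : ℤ :=
  if 0 ≤ b then Ring.choose a b.toNat else 0

/-- Generalized Lucas polynomials
`L^{(k)}_m(x) = ∑_{j=0}^{⌊m/k⌋} (m/(m-(k-1)j)) C(m-(k-1)j, j) x^{m-kj}` for `m > 0`,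
and `L^{(k)}_0(x) = k`. -/
noncomputable def genLucas (k m : ℕ) (x : ℝ) : ℝ :=
  if m = 0 then (k : ℝ)
  else ∑ j ∈ Finset.range (m / k + 1),
    ((m : ℝ) / ((m - (k - 1) * j : ℕ) : ℝ)) *
      (Nat.choose (m - (k - 1) * j) j : ℝ) * x ^ (m - k * j)


lemma gchoose_natCast (a b : ℕ) : gchoose (a : ℤ) (b : ℤ) = Nat.choose a b := by
  rw [gchoose, if_pos (by positivity)]
  simp [Ring.choose_natCast]

lemma gchoose_neg (a : ℤ) {b : ℤ} (h : b < 0) : gchoose a b = 0 := by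
  rw [gchoose, if_neg (by omega)]

noncomputable def Mfam (k r : ℕ) (x : ℝ) (p : ℕ) : Matrix (Fin p) (Fin p) ℝ :=
  Matrix.of fun i j : Fin p =>
    (gchoose ((k : ℤ) * (i : ℤ) + (r : ℤ)) ((i : ℤ) - (j : ℤ)) : ℝ) * x ^ k +
    (gchoose ((k : ℤ) * ((i : ℤ) + 1) + (r : ℤ)) ((i : ℤ) + 1 - (j : ℤ)) : ℝ)

lemma Mfam_apply_le {k r : ℕ} {x : ℝ} {p : ℕ} {i j : Fin p} (h : (j:ℕ) ≤ (i:ℕ)) :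
    Mfam k r x p i j = (Nat.choose (k*i+r) (i-j) : ℝ) * x ^ k +
      (Nat.choose (k*(i+1)+r) (i+1-j) : ℝ) := by
  have e1 : (k : ℤ) * (i : ℤ) + (r : ℤ) = ((k*i+r : ℕ) : ℤ) := by push_cast; ring
  have e2 : (i : ℤ) - (j : ℤ) = (((i:ℕ)-(j:ℕ) : ℕ) : ℤ) := by
    rw [Nat.cast_sub h]
  have e3 : (k : ℤ) * ((i : ℤ) + 1) + (r : ℤ) = ((k*((i:ℕ)+1)+r : ℕ) : ℤ) := by push_cast; ring
  have e4 : (i : ℤ) + 1 - (j : ℤ) = (((i:ℕ)+1-(j:ℕ) : ℕ) : ℤ) := by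
    rw [Nat.cast_sub (by omega)]; push_cast; ring
  rw [Mfam, Matrix.of_apply, e1, e2, e3, e4, gchoose_natCast, gchoose_natCast]
  norm_cast

lemma Mfam_apply_succ {k r : ℕ} {x : ℝ} {p : ℕ} {i j : Fin p} (h : (j:ℕ) = (i:ℕ)+1) :
    Mfam k r x p i j = 1 := by
  rw [Mfam, Matrix.of_apply, gchoose_neg _ (by omega : (i:ℤ) - (j:ℤ) < 0)]
  have e4 : (i : ℤ) + 1 - (j : ℤ) = ((0:ℕ) : ℤ) := by omega
  rw [e4]
  have e3 : (k : ℤ) * ((i : ℤ) + 1) + (r : ℤ) = ((k*((i:ℕ)+1)+r : ℕ) : ℤ) := by push_cast; ring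
  rw [e3, gchoose_natCast]
  simp

lemma Mfam_apply_zero {k r : ℕ} {x : ℝ} {p : ℕ} {i j : Fin p} (h : (i:ℕ)+1 < (j:ℕ)) :
    Mfam k r x p i j = 0 := by
  rw [Mfam, Matrix.of_apply, gchoose_neg _ (by omega : (i:ℤ) - (j:ℤ) < 0),
    gchoose_neg _ (by omega : (i:ℤ) + 1 - (j:ℤ) < 0)]
  simp

lemma sign_congr {a b : ℕ} (h : a % 2 = b % 2) : (-1:ℝ)^a = (-1:ℝ)^b := by
  rcases Nat.even_or_odd a with ha | ha
  · have hb : Even b := by rw [Nat.even_iff] at *; omega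
    rw [ha.neg_one_pow, hb.neg_one_pow]
  · have hb : Odd b := by rw [Nat.odd_iff] at *; omega
    rw [ha.neg_one_pow, hb.neg_one_pow]

lemma hess_det : ∀ (n : ℕ) (M : Matrix (Fin (n+1)) (Fin (n+1)) ℝ),
    (∀ i j : Fin (n+1), (i:ℕ)+1 < (j:ℕ) → M i j = 0) →
    (∀ i j : Fin (n+1), (j:ℕ) = (i:ℕ)+1 → M i j = 1) →
    M.det = ∑ t : Fin (n+1), (-1:ℝ)^(n+(t:ℕ)) * M (Fin.last n) t *
      (M.submatrix (Fin.castLE t.isLt.le) (Fin.castLE t.isLt.le)).det := by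
  intro n
  induction n with
  | zero =>
    intro M h0 h1
    rw [Matrix.det_fin_one, Fin.sum_univ_one]
    simp [Matrix.det_fin_zero]
  | succ n IH =>
    intro M h0 h1
    rw [Matrix.det_succ_column M (Fin.last (n+1)), Fin.succAbove_last]
    rw [Fin.sum_univ_castSucc, Fin.sum_univ_castSucc]
    have hzero : ∀ i : Fin n,
        (-1:ℝ) ^ ((Fin.castSucc (Fin.castSucc i) : ℕ) + ((Fin.last (n+1) : Fin (n+2)):ℕ)) *
          M (Fin.castSucc (Fin.castSucc i)) (Fin.last (n+1)) *
          (M.submatrix (Fin.castSucc (Fin.castSucc i)).succAbove Fin.castSucc).det = 0 := by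
      intro i
      rw [h0 _ _ (by simp)]
      ring
    rw [Finset.sum_congr rfl (fun i _ => hzero i), Finset.sum_const_zero, zero_add]
    conv_rhs => rw [Fin.sum_univ_castSucc]
    have hcastLE : (Fin.castLE (Fin.last (n+1)).isLt.le : Fin (n+1) → Fin (n+2)) =
        Fin.castSucc := by
      funext p; exact Fin.ext rfl
    have hlastterm :
        (-1:ℝ) ^ (((Fin.last (n+1) : Fin (n+2)):ℕ) + ((Fin.last (n+1) : Fin (n+2)):ℕ)) *
          M (Fin.last (n+1)) (Fin.last (n+1)) *
          (M.submatrix (Fin.last (n+1)).succAbove Fin.castSucc).det =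
        (-1:ℝ)^((n+1)+((Fin.last (n+1) : Fin (n+2)):ℕ)) *
          M (Fin.last (n+1)) (Fin.last (n+1)) *
          (M.submatrix (Fin.castLE (Fin.last (n+1)).isLt.le)
            (Fin.castLE (Fin.last (n+1)).isLt.le)).det := by
      rw [Fin.succAbove_last, hcastLE]
      simp only [Fin.val_last]
    rw [hlastterm]
    congr 1
    -- main term i = castSucc (last n)
    set N : Matrix (Fin (n+1)) (Fin (n+1)) ℝ :=
      M.submatrix (Fin.castSucc (Fin.last n)).succAbove Fin.castSucc with hN
    have hval : ∀ p : Fin (n+1),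
        (((Fin.castSucc (Fin.last n)).succAbove p : Fin (n+2)) : ℕ) =
          if (p:ℕ) < n then (p:ℕ) else (p:ℕ)+1 := by
      intro p
      by_cases hp : (p:ℕ) < n
      · rw [Fin.succAbove_of_castSucc_lt _ _ (by rw [Fin.lt_def]; simpa using hp)]
        simp [hp]
      · rw [Fin.succAbove_of_le_castSucc _ _ (by rw [Fin.le_def]; simp; omega)]
        simp [hp]
    have hN0 : ∀ p q : Fin (n+1), (p:ℕ)+1 < (q:ℕ) → N p q = 0 := by
      intro p q hpq
      have hq := q.isLt
      apply h0
      simp only [hval, Fin.coe_castSucc]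
      split_ifs <;> omega
    have hN1 : ∀ p q : Fin (n+1), (q:ℕ) = (p:ℕ)+1 → N p q = 1 := by
      intro p q hpq
      have hq := q.isLt
      apply h1
      simp only [hval, Fin.coe_castSucc]
      split_ifs <;> omega
    have hrow : ∀ t : Fin (n+1), N (Fin.last n) t = M (Fin.last (n+1)) (Fin.castSucc t) := by
      intro t
      show M _ _ = _
      congr 1
      apply Fin.ext
      rw [hval]
      simp
    have hminor : ∀ t : Fin (n+1),
        (N.submatrix (Fin.castLE t.isLt.le) (Fin.castLE t.isLt.le)) =
        (M.submatrix (Fin.castLE (Fin.castSucc t).isLt.le)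
          (Fin.castLE (Fin.castSucc t).isLt.le)) := by
      intro t
      funext p q
      have hpt := p.isLt
      have htn := t.isLt
      show M _ _ = M _ _
      congr 1
      · apply Fin.ext
        rw [hval]
        simp only [Fin.coe_castLE]
        rw [if_pos (by omega)]
    rw [IH N hN0 hN1, Finset.mul_sum]
    apply Finset.sum_congr rfl
    intro t _
    rw [hrow, hminor, h1 _ _ (by simp)]
    simp only [Fin.coe_castSucc, Fin.val_last, mul_one]
    have hs' : (-1:ℝ)^((n+1)+(t:ℕ)) = (-1:ℝ)^(n+(n+1)) * (-1:ℝ)^(n+(t:ℕ)) := by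
      rw [← pow_add]
      exact sign_congr (by omega)
    rw [hs']
    ring

noncomputable def cAux (k r : ℕ) (t u : ℕ) : ℝ :=
  if t = 0 then 1 else
    ((k*t+r : ℕ):ℝ)/((t+(k-1)*u+r : ℕ):ℝ) * (Nat.choose (t+(k-1)*u+r) (t-u) : ℝ)

noncomputable def Afun (k r n : ℕ) (t u : ℕ) : ℝ :=
  (-1:ℝ)^(n+t) * (Nat.choose (k*n+r) (n-t) : ℝ) * cAux k r t u

lemma dEG_inner_sum (k r n u : ℕ) (hk : 0 < k) (hu : u ≤ n) :
    ∑ t ∈ Finset.Ico u (n+1), Afun k r n t u = if u = n then 1 else 0 := by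
  obtain ⟨k', rfl⟩ : ∃ k', k = k'+1 := ⟨k-1, by omega⟩
  rcases eq_or_lt_of_le hu with rfl | hun
  · -- u = n : single term
    rw [if_pos rfl, Nat.Ico_succ_singleton, Finset.sum_singleton]
    rcases Nat.eq_zero_or_pos u with rfl | hu0
    · simp [Afun, cAux]
    · rw [Afun, cAux, if_neg (by omega)]
      have harg : u+(k'+1-1)*u+r = (k'+1)*u+r := by
        simp only [Nat.add_sub_cancel]; ring
      rw [harg]
      have hpos : ((((k'+1)*u+r : ℕ)):ℝ) ≠ 0 := by
        have : 0 < (k'+1)*u+r := by positivity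
        exact_mod_cast this.ne'
      have heven : Even (u+u) := ⟨u, rfl⟩
      push_cast at hpos
      simp [div_self hpos, heven.neg_one_pow]
  · -- u < n : telescoping
    rw [if_neg (by omega)]
    set m := (k'+1)*n+r with hm
    set b : ℕ → ℝ := fun t =>
      if t ≤ u ∨ n < t then 0 else
        (-1:ℝ)^(n+t+1) * (Nat.choose m (n-t) : ℝ) *
          (Nat.choose (t+k'*u+r-1) (t-u-1) : ℝ) * ((k'*n+r+t : ℕ):ℝ) / ((n-u : ℕ):ℝ)
      with hb
    have hkn : (k'+1)*n = k'*n+n := by ring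
    have key : ∀ t, u ≤ t → t ≤ n → Afun (k'+1) r n t u = b (t+1) - b t := by
      intro t ht htn
      have hbt1v : ∀ s : ℕ, u < s → s ≤ n → b s =
          (-1:ℝ)^(n+s+1) * (Nat.choose m (n-s) : ℝ) *
          (Nat.choose (s+k'*u+r-1) (s-u-1) : ℝ) * ((k'*n+r+s : ℕ):ℝ) / ((n-u : ℕ):ℝ) := by
        intro s hs1 hs2
        rw [hb]
        simp only
        rw [if_neg (by omega)]
      have hdu : (((n-u : ℕ)):ℝ) ≠ 0 := by
        have : 0 < n - u := by omega
        exact_mod_cast this.ne'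
      rcases eq_or_lt_of_le ht with rfl | htu
      · -- t = u
        have hb0 : b u = 0 := by rw [hb]; simp only; rw [if_pos (by omega)]
        rw [hb0, sub_zero, hbt1v (u+1) (by omega) (by omega)]
        have e1 : u+1+k'*u+r-1 = u+k'*u+r := by omega
        have e2 : u+1-u-1 = 0 := by omega
        rw [e1, e2, Nat.choose_zero_right]
        have hcA : cAux (k'+1) r u u = 1 := by
          rcases Nat.eq_zero_or_pos u with rfl | hu0
          · simp [cAux]
          · rw [cAux, if_neg (by omega)]
            have hku : (k'+1)*u = k'*u+u := by ring
            have e3 : u+(k'+1-1)*u+r = (k'+1)*u+r := by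
              simp only [Nat.add_sub_cancel]
              omega
            rw [e3, Nat.sub_self, Nat.choose_zero_right]
            have hpos : ((((k'+1)*u+r : ℕ)):ℝ) ≠ 0 := by
              have : 0 < (k'+1)*u+r := by positivity
              exact_mod_cast this.ne'
            rw [div_self hpos]
            simp
        rw [Afun, hcA, mul_one]
        have s1 : (-1:ℝ)^(n+(u+1)+1) = (-1:ℝ)^(n+u) := by
          rw [show n+(u+1)+1 = (n+u)+2 by ring, pow_add]
          norm_num
        rw [s1]
        have F : (Nat.choose m (n-u-1)) * ((k'*n+r+u+1)) = (Nat.choose m (n-u)) * (n-u) := by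
          have h0 := Nat.choose_succ_right_eq m (n-u-1)
          have e4 : n-u-1+1 = n-u := by omega
          have e5 : m - (n-u-1) = k'*n+r+u+1 := by rw [hm]; omega
          rw [e4, e5] at h0
          omega
        have CF : ((Nat.choose m (n-u-1) : ℕ):ℝ) * ((k'*n+r+u+1 : ℕ):ℝ)
            = ((Nat.choose m (n-u) : ℕ):ℝ) * ((n-u : ℕ):ℝ) := by exact_mod_cast F
        have e6 : n - (u+1) = n-u-1 := by omega
        have e7 : (k'*n+r+(u+1)) = k'*n+r+u+1 := by ring
        rw [e6, e7, eq_div_iff hdu]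
        linear_combination ((-1:ℝ)^(n+u)) * CF.symm
      · -- u < t
        have ht1 : 1 ≤ t := by omega
        have hbtv := hbt1v t (by omega) htn
        have hcA : cAux (k'+1) r t u =
            (((k'+1)*t+r : ℕ):ℝ)/((t+k'*u+r : ℕ):ℝ) * (Nat.choose (t+k'*u+r) (t-u) : ℝ) := by
          rw [cAux, if_neg (by omega)]
          congr 3 <;> · simp only [Nat.add_sub_cancel]
        have hNpos : (((t+k'*u+r : ℕ)):ℝ) ≠ 0 := by
          have : 0 < t+k'*u+r := by omega
          exact_mod_cast this.ne'
        have CF1 : ((t+k'*u+r : ℕ):ℝ) * ((Nat.choose (t+k'*u+r-1) (t-u-1) : ℕ):ℝ)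
            = ((Nat.choose (t+k'*u+r) (t-u) : ℕ):ℝ) * ((t-u : ℕ):ℝ) := by
          have h0 := Nat.add_one_mul_choose_eq (t+k'*u+r-1) (t-u-1)
          rw [show t+k'*u+r-1+1 = t+k'*u+r by omega, show t-u-1+1 = t-u by omega] at h0
          exact_mod_cast h0
        have s2 : (-1:ℝ)^(n+t+1) = -((-1:ℝ)^(n+t)) := by
          rw [pow_succ]; ring
        rw [Afun, hcA, hbtv, s2]
        rcases eq_or_lt_of_le htn with heq | htln
        · -- t = n
          subst heq
          have hb1 : b (t+1) = 0 := by rw [hb]; simp only; rw [if_pos (by omega)]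
          rw [hb1, zero_sub]
          rw [Nat.sub_self, Nat.choose_zero_right]
          push_cast [Nat.cast_sub (le_of_lt htu)] at CF1 ⊢
          have hdu' : ((t:ℝ) - (u:ℝ)) ≠ 0 := sub_ne_zero_of_ne (by exact_mod_cast htu.ne')
          field_simp [hdu']
          linear_combination (-((k':ℝ)*t+r+t)) * CF1
        · -- t < n
          rw [hbt1v (t+1) (by omega) (by omega)]
          have e1 : t+1+k'*u+r-1 = t+k'*u+r := by omega
          have e2 : t+1-u-1 = t-u := by omega
          have e6 : n - (t+1) = n-t-1 := by omega
          rw [e1, e2, e6]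
          have s1 : (-1:ℝ)^(n+(t+1)+1) = (-1:ℝ)^(n+t) := by
            rw [show n+(t+1)+1 = (n+t)+2 by ring, pow_add]
            norm_num
          rw [s1]
          have CF2 : ((Nat.choose m (n-t-1) : ℕ):ℝ) * ((k'*n+r+t+1 : ℕ):ℝ)
              = ((Nat.choose m (n-t) : ℕ):ℝ) * ((n-t : ℕ):ℝ) := by
            have h0 := Nat.choose_succ_right_eq m (n-t-1)
            have e4 : n-t-1+1 = n-t := by omega
            have e5 : m - (n-t-1) = k'*n+r+t+1 := by rw [hm]; omega
            rw [e4, e5] at h0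
            exact_mod_cast (by omega : (Nat.choose m (n-t-1)) * ((k'*n+r+t+1)) = (Nat.choose m (n-t)) * (n-t))
          push_cast [Nat.cast_sub (show u ≤ t by omega), Nat.cast_sub (show t ≤ n by omega),
            Nat.cast_sub (show u ≤ n by omega)] at CF1 CF2 ⊢
          have hdu' : ((n:ℝ) - (u:ℝ)) ≠ 0 := sub_ne_zero_of_ne (by exact_mod_cast hun.ne')
          rw [← hm]
          field_simp [hdu']
          linear_combination (-1 * ((Nat.choose (t+k'*u+r) (t-u) : ℕ):ℝ) * ((t:ℝ)+(k':ℝ)*(u:ℝ)+(r:ℝ))) * CF2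
            + (-1 * ((Nat.choose m (n-t) : ℕ):ℝ) * ((k':ℝ)*(n:ℝ)+(r:ℝ)+(t:ℝ))) * CF1
    rw [Finset.sum_congr rfl (fun t htm => key t (Finset.mem_Ico.mp htm).1
      (by have := (Finset.mem_Ico.mp htm).2; omega))]
    rw [Finset.sum_Ico_eq_sum_range]
    have : ∀ i, b (u + i + 1) - b (u + i) = (fun j => b (u + j)) (i+1) - (fun j => b (u+j)) i := by
      intro i; simp [Nat.add_assoc]
    rw [Finset.sum_congr rfl (fun i _ => this i), Finset.sum_range_sub (fun j => b (u+j))]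
    have h1 : b (u + (n+1-u)) = 0 := by
      rw [hb]; simp only; rw [if_pos (by omega)]
    have h2 : b (u+0) = 0 := by
      rw [hb]; simp only; rw [if_pos (by omega)]
    rw [h1, h2, sub_zero]

noncomputable def Pfun (k r : ℕ) (x : ℝ) (t : ℕ) : ℝ :=
  if t = 0 then x^r else genLucas k (k*t+r) x

lemma dEG_expand (k r n : ℕ) (hk : 0 < k) (hr : r < k) (x : ℝ) (t : ℕ) :
    (-1:ℝ)^(n+t) * (Nat.choose (k*n+r) (n-t) : ℝ) * Pfun k r x t
      = ∑ u ∈ Finset.range (t+1), Afun k r n t u * x^(k*u+r) := by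
  rcases Nat.eq_zero_or_pos t with rfl | ht0
  · simp [Pfun, Afun, cAux]
  · have hm0 : ¬ (k*t+r = 0) := by
      have := Nat.mul_pos hk ht0
      omega
    rw [Pfun, if_neg (by omega), genLucas, if_neg hm0]
    have hdiv : (k*t+r)/k = t := by
      rw [Nat.mul_add_div hk, Nat.div_eq_of_lt hr, Nat.add_zero]
    rw [hdiv]
    rw [← Finset.sum_range_reflect]
    rw [Finset.mul_sum]
    apply Finset.sum_congr rfl
    intro u hu
    have hu' : u ≤ t := by
      simp only [Finset.mem_range] at hu; omega
    obtain ⟨k', rfl⟩ : ∃ k', k = k'+1 := ⟨k-1, by omega⟩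
    have a2 : t+1-1-u = t-u := by omega
    rw [a2]
    have p1 : (k'+1)*t = k'*t+t := by ring
    have p3 : k'*(t-u)+k'*u = k'*t := by
      rw [← Nat.mul_add, Nat.sub_add_cancel hu']
    have a1 : (k'+1)*t+r - ((k'+1)-1)*(t-u) = t+((k'+1)-1)*u+r := by
      simp only [Nat.add_sub_cancel]
      omega
    have a3 : (k'+1)*t+r - (k'+1)*(t-u) = (k'+1)*u+r := by
      have p4 : (k'+1)*(t-u) = k'*(t-u)+(t-u) := by ring
      have p5 : (k'+1)*u = k'*u+u := by ring
      omega
    rw [a1, a3]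
    rw [Afun, cAux, if_neg (by omega)]
    ring

lemma dEG_star2 (k r : ℕ) (hk : 0 < k) (hr : r < k) (x : ℝ) (n : ℕ) :
    ∑ t ∈ Finset.range (n+1), (-1:ℝ)^(n+t) * (Nat.choose (k*n+r) (n-t) : ℝ) * Pfun k r x t
      = x^(k*n+r) := by
  rw [Finset.sum_congr rfl (fun t _ => dEG_expand k r n hk hr x t)]
  have hswap := Finset.sum_Ico_Ico_comm 0 (n+1) (fun u t => Afun k r n t u * x^(k*u+r))
  simp only [Nat.Ico_zero_eq_range] at hswap
  rw [← hswap]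
  have hinner : ∀ u ∈ Finset.range (n+1),
      ∑ t ∈ Finset.Ico u (n+1), Afun k r n t u * x^(k*u+r)
        = if u = n then x^(k*u+r) else 0 := by
    intro u hu
    rw [← Finset.sum_mul, dEG_inner_sum k r n u hk
      (by simp only [Finset.mem_range] at hu; omega), ite_mul, one_mul, zero_mul]
  rw [Finset.sum_congr rfl hinner, Finset.sum_ite_eq' (Finset.range (n+1)) n
    (fun u => x^(k*u+r)), if_pos (by simp)]

lemma dEG_star (k r : ℕ) (hk : 0 < k) (hr : r < k) (x : ℝ) (q : ℕ) :
    genLucas k (k*(q+1)+r) x = ∑ t ∈ Finset.range (q+1),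
      (-1:ℝ)^(q+t) * ((Nat.choose (k*q+r) (q-t) : ℝ) * x^k
        + (Nat.choose (k*(q+1)+r) (q+1-t) : ℝ)) * Pfun k r x t := by
  have S1 := dEG_star2 k r hk hr x (q+1)
  have S0 := dEG_star2 k r hk hr x q
  rw [Finset.sum_range_succ] at S1
  have hlast : (-1:ℝ)^((q+1)+(q+1)) * (Nat.choose (k*(q+1)+r) ((q+1)-(q+1)) : ℝ) *
      Pfun k r x (q+1) = genLucas k (k*(q+1)+r) x := by
    have he : Even ((q+1)+(q+1)) := ⟨q+1, rfl⟩
    rw [he.neg_one_pow, Nat.sub_self, Nat.choose_zero_right, Pfun, if_neg (by omega)]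
    ring
  rw [hlast] at S1
  have hxp : x^(k*(q+1)+r) = x^k * x^(k*q+r) := by
    rw [← pow_add]
    congr 1
    ring
  rw [hxp, ← S0, Finset.mul_sum] at S1
  have S2 : genLucas k (k*(q+1)+r) x = ∑ t ∈ Finset.range (q+1),
      (x ^ k * ((-1:ℝ)^(q+t) * (Nat.choose (k*q+r) (q-t) : ℝ) * Pfun k r x t)
       - (-1:ℝ)^(q+1+t) * (Nat.choose (k*(q+1)+r) (q+1-t) : ℝ) * Pfun k r x t) := by
    rw [Finset.sum_sub_distrib]
    linarith [S1]
  rw [S2]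
  apply Finset.sum_congr rfl
  intro t _
  have hs : (-1:ℝ)^(q+1+t) = -((-1:ℝ)^(q+t)) := by
    rw [show q+1+t = (q+t)+1 by ring, pow_succ]
    ring
  rw [hs]
  ring

lemma dEG_key (k r : ℕ) (hk : 0 < k) (hr : r < k) (x : ℝ) :
    ∀ n, x^r * (Mfam k r x n).det = Pfun k r x n := by
  intro n
  induction n using Nat.strong_induction_on with
  | _ n IH =>
    match n, IH with
    | 0, _ =>
      rw [Matrix.det_isEmpty, Pfun, if_pos rfl, mul_one]
    | (q+1), IH =>
      rw [hess_det q (Mfam k r x (q+1)) (fun i j h => Mfam_apply_zero h)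
        (fun i j h => Mfam_apply_succ h), Finset.mul_sum]
      have hterm : ∀ t : Fin (q+1),
          x^r * ((-1:ℝ)^(q+(t:ℕ)) * (Mfam k r x (q+1)) (Fin.last q) t *
            ((Mfam k r x (q+1)).submatrix (Fin.castLE t.isLt.le)
              (Fin.castLE t.isLt.le)).det)
          = (-1:ℝ)^(q+(t:ℕ)) * ((Nat.choose (k*q+r) (q-(t:ℕ)) : ℝ) * x^k
              + (Nat.choose (k*(q+1)+r) (q+1-(t:ℕ)) : ℝ)) * Pfun k r x (t:ℕ) := by
        intro t
        have hsub : (Mfam k r x (q+1)).submatrix (Fin.castLE t.isLt.le)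
            (Fin.castLE t.isLt.le) = Mfam k r x (t:ℕ) := rfl
        have hle : (t:ℕ) ≤ ((Fin.last q : Fin (q+1)):ℕ) := by
          simp [Fin.val_last]
          omega
        rw [hsub, Mfam_apply_le hle, ← IH (t:ℕ) t.isLt]
        simp only [Fin.val_last]
        ring
      rw [Finset.sum_congr rfl (fun t _ => hterm t)]
      rw [Pfun, if_neg (by omega), dEG_star k r hk hr x q]
      exact Fin.sum_univ_eq_sum_range (fun t => (-1:ℝ)^(q+t) *
        ((Nat.choose (k*q+r) (q-t) : ℝ) * x^k
          + (Nat.choose (k*(q+1)+r) (q+1-t) : ℝ)) * Pfun k r x t) (q+1)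

theorem det_eq_genLucas (k r n : ℕ) (hr : r < k) (hn : 1 ≤ n) (x : ℝ) :
    x ^ r * Matrix.det (Matrix.of fun i j : Fin n =>
        (gchoose ((k : ℤ) * (i : ℤ) + (r : ℤ)) ((i : ℤ) - (j : ℤ)) : ℝ) * x ^ k +
        (gchoose ((k : ℤ) * ((i : ℤ) + 1) + (r : ℤ)) ((i : ℤ) + 1 - (j : ℤ)) : ℝ)) =
      genLucas k (k * n + r) x := by
  have h := dEG_key k r (by omega) hr x n
  rw [Pfun, if_neg (by omega)] at h
  exact h
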